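/- arXiv:1009.0763 — 3 statements merged into one kernel-verified Lean document; each statement's English description precedes it below -/
import Mathlib

section
/- For every tuple of integers b1,...,bn ≥ 2, one has lcm(b1,...,bn)/((b1−1)(b2−1)···(bn−1)) ≤ ∏_{i=1}^n p_i/(p_i−1), where p_i denotes the i-th prime (p_1 = 2, p_2 = 3, ...). -/
/-!
Write the lcm `L` of the `bᵢ` as a product of pairwise coprime factors `mᵢ ∣ bᵢ`, by giving
each prime power `p ^ v_p(L)` to an index `i` with `p ^ v_p(L) ∣ bᵢ`. Then `mᵢ / (bᵢ - 1)` is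
at most `1` if `mᵢ = 1`, and otherwise at most `qᵢ / (qᵢ - 1)` for the smallest prime `qᵢ` of
`mᵢ`, since `x ↦ x / (x - 1)` decreases. The `qᵢ` are distinct primes, at most `n` of them, and
`n` distinct primes give the largest such product when they are the first `n` primes.
-/

open Finset Function

theorem Nat.exists_pow_factorization_dvd_of_mem_primeFactors_lcm {ι : Type*} {s : Finset ι}
    {f : ι → ℕ} (hf : ∀ i ∈ s, f i ≠ 0) {p : ℕ} (hp : p ∈ (s.lcm f).primeFactors) :
    ∃ i ∈ s, p ^ (s.lcm f).factorization p ∣ f i := by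
  have hs : s.Nonempty := by
    contrapose! hp
    simp [hp]
  obtain ⟨i, hi, hsup⟩ := s.exists_mem_eq_sup hs fun i ↦ (f i).factorization p
  refine ⟨i, hi, ?_⟩
  rw [Finset.factorization_lcm hf, hsup]
  exact Nat.ordProj_dvd (f i) p

theorem Nat.exists_pairwise_coprime_dvd_prod_eq_lcm {ι : Type*} (s : Finset ι) (f : ι → ℕ)
    (hf : ∀ i ∈ s, f i ≠ 0) :
    ∃ m : ι → ℕ, (∀ i ∈ s, m i ∣ f i) ∧ (s : Set ι).Pairwise (Nat.Coprime on m) ∧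
      ∏ i ∈ s, m i = s.lcm f := by
  classical
  obtain rfl | ⟨i₀, -⟩ := s.eq_empty_or_nonempty
  · exact ⟨fun _ ↦ 1, by simp⟩
  have : Nonempty ι := ⟨i₀⟩
  set L := s.lcm f
  have hL : L ≠ 0 := Finset.lcm_ne_zero_iff.mpr hf
  choose! c hcs hc using fun p (hp : p ∈ L.primeFactors) ↦
    Nat.exists_pow_factorization_dvd_of_mem_primeFactors_lcm hf hp
  let m i := ∏ p ∈ L.primeFactors with c p = i, p ^ L.factorization p
  have hprime : ∀ i, ∀ p ∈ L.primeFactors.filter (c · = i), p.Prime := fun i p hp ↦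
    Nat.prime_of_mem_primeFactors (mem_filter.mp hp).1
  have hcop_fiber : ∀ i, ((L.primeFactors.filter (c · = i) : Finset ℕ) : Set ℕ).Pairwise
      (Nat.Coprime on fun p ↦ p ^ L.factorization p) := fun i p hp q hq hpq ↦
    Nat.coprime_pow_primes _ _ (hprime i p hp) (hprime i q hq) hpq
  refine ⟨m, fun i _ ↦ ?_, fun i _ j _ hij ↦ ?_, ?_⟩
  · show ∏ p ∈ L.primeFactors with c p = i, _ ∣ f i
    rw [← Finset.lcm_eq_prod (hcop_fiber i)]
    refine Finset.lcm_dvd fun p hp ↦ ?_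
    obtain ⟨hpL, rfl⟩ := mem_filter.mp hp
    exact hc p hpL
  · refine Nat.Coprime.prod_left fun p hp ↦ Nat.Coprime.prod_right fun q hq ↦ ?_
    refine Nat.coprime_pow_primes _ _ (hprime i p hp) (hprime j q hq) ?_
    rintro rfl
    exact hij ((mem_filter.mp hp).2.symm.trans (mem_filter.mp hq).2)
  · rw [prod_fiberwise_of_maps_to hcs]
    exact (Nat.prod_primeFactors_pow_factorization hL).symm

theorem Nat.injOn_minFac_of_pairwise_coprime {ι : Type*} {s : Set ι} {m : ι → ℕ}
    (hm : s.Pairwise (Nat.Coprime on m)) :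
    Set.InjOn (fun i ↦ (m i).minFac) {i ∈ s | m i ≠ 1} := by
  intro i hi j hj hij
  by_contra hne
  have hdvd : (m i).minFac ∣ Nat.gcd (m i) (m j) :=
    Nat.dvd_gcd (Nat.minFac_dvd _) ((congrArg (· ∣ m j) hij).mpr (Nat.minFac_dvd _))
  rw [hm hi.1 hj.1 hne, Nat.dvd_one, Nat.minFac_eq_one_iff] at hdvd
  exact hi.2 hdvd

theorem div_sub_one_le_div_sub_one {K : Type*} [Field K] [LinearOrder K] [IsStrictOrderedRing K]
    {x y : K} (hx : 1 < x) (hxy : x ≤ y) : y / (y - 1) ≤ x / (x - 1) := by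
  rw [div_le_div_iff₀ (by linarith) (by linarith)]
  nlinarith

theorem one_le_div_sub_one {K : Type*} [Field K] [LinearOrder K] [IsStrictOrderedRing K]
    {x : K} (hx : 1 < x) : 1 ≤ x / (x - 1) := by
  rw [le_div_iff₀ (by linarith)]
  linarith

theorem Nat.cast_div_cast_sub_one_le_of_dvd {m b : ℕ} (hmb : m ∣ b) (hb : 2 ≤ b) :
    (m : ℚ) / ((b : ℚ) - 1) ≤
      if m ≠ 1 then (m.minFac : ℚ) / ((m.minFac : ℚ) - 1) else 1 := by
  have hb' : (2 : ℚ) ≤ b := by exact_mod_cast hb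
  split_ifs with hm
  · have hm0 : m ≠ 0 := by rintro rfl; simp at hmb; omega
    have hq : (2 : ℚ) ≤ m.minFac := by exact_mod_cast (Nat.minFac_prime hm).two_le
    have hqm : (m.minFac : ℚ) ≤ m := by exact_mod_cast Nat.minFac_le (Nat.pos_of_ne_zero hm0)
    have hmb' : (m : ℚ) ≤ b := by exact_mod_cast Nat.le_of_dvd (by omega) hmb
    calc (m : ℚ) / ((b : ℚ) - 1) ≤ m / ((m : ℚ) - 1) :=
          div_le_div_of_nonneg_left (by positivity) (by linarith) (by linarith)
      _ ≤ _ := div_sub_one_le_div_sub_one (by linarith) hqm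
  · rw [not_not.mp hm, Nat.cast_one, div_le_one (by linarith)]
    linarith

theorem Finset.prod_le_prod_range_of_antitone {R : Type*} [CommSemiring R] [PartialOrder R]
    [IsOrderedRing R] {a : ℕ → R} (ha : Antitone a) (h1 : ∀ j, 1 ≤ a j) {J : Finset ℕ}
    {n : ℕ} (hJ : #J ≤ n) : ∏ j ∈ J, a j ≤ ∏ j ∈ range n, a j := by
  have h0 : ∀ j, 0 ≤ a j := fun j ↦ zero_le_one.trans (h1 j)
  induction n generalizing J with
  | zero => simp [card_eq_zero.mp (Nat.le_zero.mp hJ)]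
  | succ n ih =>
    rw [prod_range_succ]
    rcases hJ.lt_or_eq with hlt | heq
    · exact (ih (Nat.lt_succ_iff.mp hlt)).trans
        (le_mul_of_one_le_right (prod_nonneg fun j _ ↦ h0 j) (h1 n))
    · have hne : J.Nonempty := card_pos.mp (by omega)
      set M := J.max' hne
      have hnM : n ≤ M := by
        have hsub : J ⊆ range (M + 1) := fun j hj ↦
          mem_range.mpr (Nat.lt_succ_of_le (J.le_max' j hj))
        have := card_le_card hsub
        rw [card_range] at this
        omega
      rw [← mul_prod_erase J a (J.max'_mem hne), mul_comm]
      exact mul_le_mul (ih (by rw [card_erase_of_mem (J.max'_mem hne)]; omega)) (ha hnM)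
        (h0 _) (prod_nonneg fun j _ ↦ h0 j)

theorem prod_div_sub_one_le_prod_nth_prime {Q : Finset ℕ} (hQ : ∀ q ∈ Q, q.Prime) {n : ℕ}
    (hn : #Q ≤ n) :
    ∏ q ∈ Q, (q : ℚ) / ((q : ℚ) - 1) ≤
      ∏ j ∈ range n, (Nat.nth Nat.Prime j : ℚ) / ((Nat.nth Nat.Prime j : ℚ) - 1) := by
  have one_lt_nth (j : ℕ) : (1 : ℚ) < Nat.nth Nat.Prime j := by
    exact_mod_cast (Nat.prime_nth_prime j).one_lt
  -- `Nat.count Nat.Prime` sends the prime `q` to its index in the enumeration of primes.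
  have hcount : ∏ q ∈ Q, (q : ℚ) / ((q : ℚ) - 1) = ∏ j ∈ Q.image (Nat.count Nat.Prime),
      (Nat.nth Nat.Prime j : ℚ) / ((Nat.nth Nat.Prime j : ℚ) - 1) := by
    rw [prod_image fun p hp q hq ↦ Nat.count_injective (hQ p hp) (hQ q hq)]
    exact prod_congr rfl fun q hq ↦ by rw [Nat.nth_count (hQ q hq)]
  rw [hcount]
  refine prod_le_prod_range_of_antitone (fun i j hij ↦ ?_) (fun j ↦ one_le_div_sub_one
    (one_lt_nth j)) (card_image_le.trans hn)
  exact div_sub_one_le_div_sub_one (one_lt_nth i)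
    (by exact_mod_cast Nat.nth_monotone Nat.infinite_setOfPred_prime hij)

theorem stmt10 (n : ℕ) (b : Fin n → ℕ) (hb : ∀ i, 2 ≤ b i) :
    (((Finset.univ.lcm b : ℕ) : ℚ)) / ∏ i, ((b i : ℚ) - 1) ≤
      ∏ i ∈ Finset.range n, ((Nat.nth Nat.Prime i : ℚ) / ((Nat.nth Nat.Prime i : ℚ) - 1)) := by
  classical
  obtain ⟨m, hmb, hcop, hprod⟩ :=
    Nat.exists_pairwise_coprime_dvd_prod_eq_lcm univ b fun i _ ↦ by have := hb i; omega
  have hb' (i : Fin n) : (1 : ℚ) < b i := by exact_mod_cast hb i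
  set T := univ.filter fun i ↦ m i ≠ 1
  have hinj : Set.InjOn (fun i ↦ (m i).minFac) T := by
    simpa [T] using Nat.injOn_minFac_of_pairwise_coprime hcop
  have hprimes : ∀ q ∈ T.image fun i ↦ (m i).minFac, q.Prime := by
    simp only [mem_image]
    rintro _ ⟨i, hi, rfl⟩
    exact Nat.minFac_prime (mem_filter.mp hi).2
  calc (((univ.lcm b : ℕ) : ℚ)) / ∏ i, ((b i : ℚ) - 1)
        = ∏ i, (m i : ℚ) / ((b i : ℚ) - 1) := by
        rw [← hprod, prod_div_distrib, Nat.cast_prod]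
    _ ≤ ∏ i, if m i ≠ 1 then ((m i).minFac : ℚ) / (((m i).minFac : ℚ) - 1) else 1 :=
        prod_le_prod (fun i _ ↦ div_nonneg (Nat.cast_nonneg _) (sub_nonneg.mpr (hb' i).le))
          fun i _ ↦ Nat.cast_div_cast_sub_one_le_of_dvd (hmb i (mem_univ i)) (hb i)
    _ = ∏ q ∈ T.image fun i ↦ (m i).minFac, (q : ℚ) / ((q : ℚ) - 1) := by
        rw [← prod_filter, prod_image hinj]
    _ ≤ _ := prod_div_sub_one_le_prod_nth_prime hprimes
        (card_image_le.trans (card_filter_le _ _) |>.trans (card_fin n).le)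
end

section
/- For n ≥ 2, the maximum l2(n) of lcm(b1,...,bn)/((b1−1)···(bn−1)) over integers b1,...,bn ≥ 3 equals (3/2)·(4/3)·∏_{i=3}^n p_i/(p_i−1), and for all n ≥ 1 one has l2(n+1) ≤ l1(n) = ∏_{i=1}^n p_i/(p_i−1). -/
/-!
Write `L = lcm b` as a product `∏ cᵢ` of pairwise coprime `cᵢ ∣ bᵢ` by handing each prime
power exactly dividing `L` to an index whose `bᵢ` it divides. A part `cᵢ ≠ 1` with a prime
factor `p` contributes `cᵢ / (bᵢ - 1) ≤ cᵢ / (cᵢ - 1) ≤ p / (p - 1)`, and at most `4 / 3` if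
`p = 2`; a part `cᵢ = 1` contributes at most `1`. The least prime factors of the parts are
distinct, and `p / (p - 1)` multiplied over `k` distinct primes is at most `l1 k`, its value on
the first `k` primes. As `l2 n = 2 / 3 * l1 n`, this bounds the ratio by `l2 n`, with equality
at `(3, 4, p₃, …, pₙ)`. Finally `l2 (n + 1) = 2 / 3 * l1 n * p / (p - 1) ≤ l1 n` for
`p = pₙ₊₁ ≥ 3`.
-/

/-- The ratio p/(p−1) for the i-th prime (0-indexed, so `primeRatio 0 = 2/1`). -/
noncomputable def primeRatio (i : ℕ) : ℚ :=
  (Nat.nth Nat.Prime i : ℚ) / ((Nat.nth Nat.Prime i : ℚ) - 1)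

/-- l1(n) = ∏_{i=1}^n p_i/(p_i−1). -/
noncomputable def l1 (n : ℕ) : ℚ := ∏ i ∈ Finset.range n, primeRatio i

/-- l2(n) = (3/2)·(4/3)·∏_{i=3}^n p_i/(p_i−1). -/
noncomputable def l2 (n : ℕ) : ℚ := (3 / 2) * (4 / 3) * ∏ i ∈ Finset.Ico 2 n, primeRatio i

/-- The quantity lcm(b₁,...,bₙ)/((b₁−1)···(bₙ−1)). -/
def lcmRatio {n : ℕ} (b : Fin n → ℕ) : ℚ :=
  (((Finset.univ.lcm b : ℕ) : ℚ)) / ∏ i, ((b i : ℚ) - 1)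

open Finset

noncomputable def natRatio (m : ℕ) : ℚ := m / (m - 1)

lemma natRatio_le_natRatio {m k : ℕ} (hm : 2 ≤ m) (hmk : m ≤ k) : natRatio k ≤ natRatio m := by
  have hm' : (2 : ℚ) ≤ m := by exact_mod_cast hm
  have hmk' : (m : ℚ) ≤ k := by exact_mod_cast hmk
  rw [natRatio, natRatio, div_le_div_iff₀ (by linarith) (by linarith)]
  nlinarith

lemma one_le_natRatio {m : ℕ} (hm : 2 ≤ m) : 1 ≤ natRatio m := by
  have hm' : (2 : ℚ) ≤ m := by exact_mod_cast hm
  rw [natRatio, le_div_iff₀ (by linarith)]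
  linarith

lemma div_sub_one_le_natRatio {c b : ℕ} (hc : 2 ≤ c) (hcb : c ≤ b) :
    (c : ℚ) / (b - 1) ≤ natRatio c := by
  have hc' : (2 : ℚ) ≤ c := by exact_mod_cast hc
  have hcb' : (c : ℚ) ≤ b := by exact_mod_cast hcb
  exact div_le_div_of_nonneg_left (by linarith) (by linarith) (by linarith)

lemma primeRatio_eq_natRatio (i : ℕ) : primeRatio i = natRatio (Nat.nth Nat.Prime i) := rfl

lemma primeRatio_antitone : Antitone primeRatio := fun _ _ hij =>
  natRatio_le_natRatio (Nat.prime_nth_prime _).two_le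
    ((Nat.nth_strictMono Nat.infinite_setOfPred_prime).monotone hij)

lemma one_le_primeRatio (i : ℕ) : 1 ≤ primeRatio i :=
  one_le_natRatio (Nat.prime_nth_prime i).two_le

lemma primeRatio_zero : primeRatio 0 = 2 := by
  rw [primeRatio_eq_natRatio, Nat.nth_prime_zero_eq_two]; norm_num [natRatio]

lemma primeRatio_one : primeRatio 1 = 3 / 2 := by
  rw [primeRatio_eq_natRatio, Nat.nth_prime_one_eq_three]; norm_num [natRatio]

lemma nth_prime_two_eq_five : Nat.nth Nat.Prime 2 = 5 := by
  simp

lemma primeRatio_le_four_thirds {i : ℕ} (hi : 2 ≤ i) : primeRatio i ≤ 4 / 3 :=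
  calc primeRatio i ≤ primeRatio 2 := primeRatio_antitone hi
    _ ≤ 4 / 3 := by rw [primeRatio_eq_natRatio, nth_prime_two_eq_five]; norm_num [natRatio]

lemma l1_succ (n : ℕ) : l1 (n + 1) = l1 n * primeRatio n := prod_range_succ _ _

lemma l1_nonneg (n : ℕ) : 0 ≤ l1 n :=
  prod_nonneg fun i _ => zero_le_one.trans (one_le_primeRatio i)

lemma l1_mono : Monotone l1 := monotone_nat_of_le_succ fun n => by
  rw [l1_succ]; exact le_mul_of_one_le_right (l1_nonneg n) (one_le_primeRatio n)

lemma l2_eq_two_thirds_mul_l1 {n : ℕ} (hn : 2 ≤ n) : l2 n = 2 / 3 * l1 n := by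
  rw [l1, ← prod_range_mul_prod_Ico _ hn, l2]
  simp only [prod_range_succ, prod_range_zero, primeRatio_zero, primeRatio_one]
  ring

lemma l2_succ_le_l1 {n : ℕ} (hn : 1 ≤ n) : l2 (n + 1) ≤ l1 n :=
  calc l2 (n + 1) = 2 / 3 * (l1 n * primeRatio n) := by
        rw [l2_eq_two_thirds_mul_l1 (by omega), l1_succ]
    _ ≤ 2 / 3 * (l1 n * (3 / 2)) := by
      gcongr
      · exact l1_nonneg n
      · exact primeRatio_one ▸ primeRatio_antitone hn
    _ = l1 n := by ring

lemma prod_natRatio_le_l1 (S : Finset ℕ) (hS : ∀ p ∈ S, p.Prime) :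
    ∏ p ∈ S, natRatio p ≤ l1 S.card := by
  induction S using Finset.induction_on_max with
  | empty => simp [l1]
  | insert m S hlt ih =>
    have hmS : m ∉ S := fun h => (hlt m h).false
    have hprimes : insert m S ⊆ {p ∈ range (m + 1) | p.Prime} := fun p hp => by
      rcases mem_insert.mp hp with rfl | hp
      · exact mem_filter.mpr ⟨self_mem_range_succ p, hS p (mem_insert_self p S)⟩
      · exact mem_filter.mpr ⟨mem_range.mpr (by have := hlt p hp; omega),
          hS p (mem_insert_of_mem hp)⟩
    -- `m` is at least the `S.card`-th prime since `insert m S` lists `S.card + 1` primes `≤ m`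
    have hnth : Nat.nth Nat.Prime S.card ≤ m := by
      refine Nat.lt_add_one_iff.mp (Nat.nth_lt_of_lt_count ?_)
      rw [Nat.count_eq_card_filter_range, Nat.lt_iff_add_one_le, ← card_insert_of_notMem hmS]
      convert card_le_card hprimes
    rw [prod_insert hmS, card_insert_of_notMem hmS, l1_succ, mul_comm (l1 _)]
    exact mul_le_mul (natRatio_le_natRatio (Nat.prime_nth_prime _).two_le hnth)
      (ih fun p hp => hS p (mem_insert_of_mem hp))
      (prod_nonneg fun p hp => zero_le_one.trans
        (one_le_natRatio (hS p (mem_insert_of_mem hp)).two_le))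
      (zero_le_one.trans (one_le_primeRatio _))

/-- `4 / 3` bounds `c / (b - 1)` for even `c ∣ b` with `3 ≤ b`: either `c = 2`, or `c ≥ 4` and
`c / (b - 1) ≤ natRatio c ≤ natRatio 4`. -/
noncomputable def primeWeight (p : ℕ) : ℚ := if p = 2 then 4 / 3 else natRatio p

lemma prod_primeWeight_le_l2 {P : Finset ℕ} {n : ℕ} (hP : ∀ p ∈ P, p.Prime) (hcard : P.card ≤ n)
    (hn : 2 ≤ n) : ∏ p ∈ P, primeWeight p ≤ l2 n := by
  rw [l2_eq_two_thirds_mul_l1 hn]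
  by_cases h2 : 2 ∈ P
  · have hodd : ∏ p ∈ P.erase 2, primeWeight p = ∏ p ∈ P.erase 2, natRatio p :=
      prod_congr rfl fun p hp => if_neg (ne_of_mem_erase hp)
    calc ∏ p ∈ P, primeWeight p = 2 / 3 * ∏ p ∈ P, natRatio p := by
          rw [← mul_prod_erase P _ h2, ← mul_prod_erase P _ h2, hodd, primeWeight, if_pos rfl]
          norm_num [natRatio]
          ring
      _ ≤ 2 / 3 * l1 n := by
          gcongr
          exact (prod_natRatio_le_l1 P hP).trans (l1_mono hcard)
  · have hodd : ∏ p ∈ P, primeWeight p = ∏ p ∈ P, natRatio p :=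
      prod_congr rfl fun p hp => if_neg (ne_of_mem_of_not_mem hp h2)
    have hP2 : ∀ p ∈ insert 2 P, p.Prime := by
      simpa only [mem_insert, forall_eq_or_imp] using ⟨Nat.prime_two, hP⟩
    calc ∏ p ∈ P, primeWeight p = (∏ p ∈ insert 2 P, natRatio p) / 2 := by
          rw [hodd, prod_insert h2]
          norm_num [natRatio]
      _ ≤ l1 (n + 1) / 2 := by
          gcongr
          exact (prod_natRatio_le_l1 _ hP2).trans
            (l1_mono ((card_insert_le 2 P).trans (by omega)))
      _ ≤ l1 n * (4 / 3) / 2 := by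
          rw [l1_succ]
          gcongr
          · exact l1_nonneg n
          · exact primeRatio_le_four_thirds hn
      _ = 2 / 3 * l1 n := by ring

lemma exists_pairwise_coprime_dvd_prod_eq_lcm {ι : Type*} [Fintype ι] (b : ι → ℕ)
    (hb : ∀ i, b i ≠ 0) :
    ∃ c : ι → ℕ, (∀ i, c i ∣ b i) ∧ ∏ i, c i = univ.lcm b ∧
      Pairwise fun i j => Nat.Coprime (c i) (c j) := by
  classical
  rcases isEmpty_or_nonempty ι with hι | hι
  · exact ⟨b, fun _ => dvd_rfl, by simp, fun i => isEmptyElim i⟩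
  set L := univ.lcm b
  have hL : L ≠ 0 := by simpa [L, Finset.lcm_eq_zero_iff] using hb
  have hmax : ∀ p ∈ L.primeFactors, ∃ i, p ^ L.factorization p ∣ b i := by
    intro p hp
    have hp' := Nat.prime_of_mem_primeFactors hp
    have hpos : 0 < L.factorization p :=
      hp'.factorization_pos_of_dvd hL (Nat.dvd_of_mem_primeFactors hp)
    rw [Finset.factorization_lcm (fun i _ => hb i)] at hpos ⊢
    obtain ⟨i, -, hi⟩ := (Finset.le_sup_iff hpos).mp le_rfl
    exact ⟨i, (hp'.pow_dvd_iff_le_factorization (hb i)).mpr hi⟩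
  choose! a ha using hmax
  have hprime : ∀ p ∈ L.primeFactors, p.Prime := fun p hp => Nat.prime_of_mem_primeFactors hp
  refine ⟨fun i => ∏ p ∈ L.primeFactors with a p = i, p ^ L.factorization p, fun i => ?_, ?_,
    fun i j hij => ?_⟩
  · refine prod_dvd_of_isRelPrime (fun p hp q hq hpq => ?_) fun p hp => ?_
    · exact Nat.coprime_iff_isRelPrime.mp <| Nat.coprime_pow_primes _ _
        (hprime p (mem_filter.mp hp).1) (hprime q (mem_filter.mp hq).1) hpq
    · exact (mem_filter.mp hp).2 ▸ ha p (mem_filter.mp hp).1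
  · rw [prod_fiberwise L.primeFactors a, ← Nat.prod_factorization_eq_prod_primeFactors]
    exact Nat.prod_factorization_pow_eq_self hL
  · refine Nat.Coprime.prod_left fun p hp => Nat.Coprime.prod_right fun q hq => ?_
    rw [mem_filter] at hp hq
    refine Nat.coprime_pow_primes _ _ (hprime p hp.1) (hprime q hq.1) fun hpq => hij ?_
    rw [← hp.2, ← hq.2, hpq]

lemma minFac_injOn_of_pairwise_coprime {ι : Type*} {c : ι → ℕ}
    (hc : Pairwise fun i j => Nat.Coprime (c i) (c j)) :
    Set.InjOn (fun i => (c i).minFac) {i | c i ≠ 1} := by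
  intro i hi j _ hij
  by_contra hne
  have hpj : (c i).minFac ∣ c j := by
    rw [show (c i).minFac = (c j).minFac from hij]
    exact Nat.minFac_dvd _
  exact (Nat.minFac_prime hi).ne_one <|
    ((hc hne).coprime_dvd_left (Nat.minFac_dvd _)).eq_one_of_dvd hpj

lemma div_sub_one_le_primeWeight {p c b : ℕ} (hp : p.Prime) (hpc : p ∣ c) (hcb : c ∣ b)
    (hb : 3 ≤ b) : (c : ℚ) / (b - 1) ≤ primeWeight p := by
  have hc0 : c ≠ 0 := ne_zero_of_dvd_ne_zero (by omega) hcb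
  have hcb' : c ≤ b := Nat.le_of_dvd (by omega) hcb
  have hpc' : p ≤ c := Nat.le_of_dvd (Nat.pos_of_ne_zero hc0) hpc
  unfold primeWeight
  split_ifs with h2
  · subst h2
    rcases eq_or_ne c 2 with rfl | hc2
    · have hb' : (3 : ℚ) ≤ b := by exact_mod_cast hb
      rw [div_le_iff₀ (by linarith)]
      push_cast
      linarith
    · have hc4 : 4 ≤ c := by obtain ⟨k, rfl⟩ := hpc; omega
      calc (c : ℚ) / (b - 1) ≤ natRatio c := div_sub_one_le_natRatio (by omega) hcb'
        _ ≤ natRatio 4 := natRatio_le_natRatio (by norm_num) hc4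
        _ = 4 / 3 := by norm_num [natRatio]
  · exact (div_sub_one_le_natRatio (hp.two_le.trans hpc') hcb').trans
      (natRatio_le_natRatio hp.two_le hpc')

lemma exists_lcmRatio_le_prod_primeWeight {n : ℕ} (b : Fin n → ℕ) (hb : ∀ i, 3 ≤ b i) :
    ∃ P : Finset ℕ, (∀ p ∈ P, p.Prime) ∧ P.card ≤ n ∧ lcmRatio b ≤ ∏ p ∈ P, primeWeight p := by
  obtain ⟨c, hcb, hprod, hcop⟩ :=
    exists_pairwise_coprime_dvd_prod_eq_lcm b fun i => by have := hb i; omega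
  have hden : ∀ i, (2 : ℚ) ≤ b i - 1 := fun i => by
    have : (3 : ℚ) ≤ b i := by exact_mod_cast hb i
    linarith
  set T := univ.filter fun i => c i ≠ 1
  have hinj : Set.InjOn (fun i => (c i).minFac) T :=
    (minFac_injOn_of_pairwise_coprime hcop).mono fun i hi => (mem_filter.mp hi).2
  refine ⟨T.image fun i => (c i).minFac, ?_, (card_image_le.trans (card_le_univ T)).trans_eq
    (Fintype.card_fin n), ?_⟩
  · simp only [mem_image]
    rintro _ ⟨i, hi, rfl⟩
    exact Nat.minFac_prime (mem_filter.mp hi).2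
  calc lcmRatio b = ∏ i, (c i : ℚ) / (b i - 1) := by
        rw [lcmRatio, ← hprod, Nat.cast_prod, prod_div_distrib]
    _ = (∏ i ∈ T, (c i : ℚ) / (b i - 1)) * ∏ i ∈ univ.filter (fun i => ¬c i ≠ 1),
          (c i : ℚ) / (b i - 1) := (prod_filter_mul_prod_filter_not _ _ _).symm
    _ ≤ (∏ i ∈ T, (c i : ℚ) / (b i - 1)) * 1 := by
        gcongr
        · exact prod_nonneg fun i _ => div_nonneg (Nat.cast_nonneg _) (by linarith [hden i])
        · refine prod_le_one (fun i _ => div_nonneg (Nat.cast_nonneg _) (by linarith [hden i]))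
            fun i hi => ?_
          rw [not_not.mp (mem_filter.mp hi).2, Nat.cast_one]
          exact div_le_one_of_le₀ (by linarith [hden i]) (by linarith [hden i])
    _ ≤ ∏ i ∈ T, primeWeight (c i).minFac := by
        rw [mul_one]
        exact prod_le_prod (fun i _ => div_nonneg (Nat.cast_nonneg _) (by linarith [hden i]))
          fun i hi => div_sub_one_le_primeWeight (Nat.minFac_prime (mem_filter.mp hi).2)
            (Nat.minFac_dvd _) (hcb i) (hb i)
    _ = ∏ p ∈ T.image fun i => (c i).minFac, primeWeight p := (prod_image hinj).symm

lemma lcmRatio_le_l2 {n : ℕ} (hn : 2 ≤ n) (b : Fin n → ℕ) (hb : ∀ i, 3 ≤ b i) :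
    lcmRatio b ≤ l2 n := by
  obtain ⟨P, hP, hcard, hle⟩ := exists_lcmRatio_le_prod_primeWeight b hb
  exact hle.trans (prod_primeWeight_le_l2 hP hcard hn)

lemma lcmRatio_eq_prod_natRatio {n : ℕ} (b : Fin n → ℕ)
    (hb : Pairwise fun i j => Nat.Coprime (b i) (b j)) : lcmRatio b = ∏ i, natRatio (b i) := by
  rw [lcmRatio, lcm_eq_prod fun i _ j _ hij => hb hij, Nat.cast_prod, ← prod_div_distrib]
  rfl

noncomputable def extremalSeq (k : ℕ) : ℕ :=
  if k = 0 then 3 else if k = 1 then 4 else Nat.nth Nat.Prime k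

lemma extremalSeq_strictMono : StrictMono extremalSeq := strictMono_nat_of_lt_succ fun k => by
  rcases k with _ | _ | k
  · simp [extremalSeq]
  · simp [extremalSeq]
  · simpa [extremalSeq] using Nat.nth_strictMono Nat.infinite_setOfPred_prime (Nat.lt_succ_self _)

lemma three_le_extremalSeq (k : ℕ) : 3 ≤ extremalSeq k :=
  extremalSeq_strictMono.monotone (Nat.zero_le k)

lemma extremalSeq_coprime_of_lt {k l : ℕ} (hkl : k < l) :
    Nat.Coprime (extremalSeq k) (extremalSeq l) := by
  rcases l with _ | _ | l
  · omega
  · obtain rfl : k = 0 := by omega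
    decide
  · have hp : (extremalSeq (l + 2)).Prime := by simp [extremalSeq]
    refine (hp.coprime_iff_not_dvd.mpr fun h => ?_).symm
    have hk : 0 < extremalSeq k := (three_le_extremalSeq k).trans_lt' (by norm_num)
    exact (extremalSeq_strictMono hkl).not_ge (Nat.le_of_dvd hk h)

lemma lcmRatio_extremalSeq {n : ℕ} (hn : 2 ≤ n) :
    lcmRatio (fun i : Fin n => extremalSeq i) = l2 n := by
  have hcop : Pairwise fun i j : Fin n => Nat.Coprime (extremalSeq i) (extremalSeq j) := by
    intro i j hij
    rcases lt_or_gt_of_ne (Fin.val_injective.ne hij) with h | h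
    · exact extremalSeq_coprime_of_lt h
    · exact (extremalSeq_coprime_of_lt h).symm
  rw [lcmRatio_eq_prod_natRatio _ hcop,
    Fin.prod_univ_eq_prod_range (fun k => natRatio (extremalSeq k)), ← prod_range_mul_prod_Ico _ hn,
    l2]
  congr 1
  · norm_num [prod_range_succ, extremalSeq, natRatio]
  · refine prod_congr rfl fun k hk => ?_
    have hk2 := (mem_Ico.mp hk).1
    rw [extremalSeq, if_neg (by omega), if_neg (by omega), primeRatio_eq_natRatio]

theorem stmt11 :
    (∀ n : ℕ, 2 ≤ n →
      (∀ b : Fin n → ℕ, (∀ i, 3 ≤ b i) → lcmRatio b ≤ l2 n) ∧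
      (∃ b : Fin n → ℕ, (∀ i, 3 ≤ b i) ∧ lcmRatio b = l2 n)) ∧
    (∀ n : ℕ, 1 ≤ n → l2 (n + 1) ≤ l1 n) :=
  ⟨fun _ hn => ⟨lcmRatio_le_l2 hn,
    ⟨fun i => extremalSeq i, fun i => three_le_extremalSeq i, lcmRatio_extremalSeq hn⟩⟩,
    fun _ hn => l2_succ_le_l1 hn⟩
end

section
/- Let n ≥ 3 and suppose μ = 2p + (−1)^n > 2^n where both p and μ are prime numbers. Then there do not exist integers a1,...,an ≥ 2 with μ = ρ(a_n, ..., a_2, a_1 + 1), where ρ(x1,...,xk) = x1···xk − x2···xk + ... + (−1)^{k−1}x_k + (−1)^k. -/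
/-- The alternating function ρ: ρ() = 1, ρ(x₁,...,x_k) = x₁·x₂···x_k − ρ(x₂,...,x_k). -/
def rho : List ℤ → ℤ
  | [] => 1
  | x :: xs => x * xs.prod - rho xs

lemma rho_append_singleton (xs : List ℤ) (c : ℤ) :
    rho (xs ++ [c]) = c * rho xs + (-1) ^ (xs.length + 1) := by
  induction xs with
  | nil => simp [rho]; ring
  | cons x t ih =>
    have hstep : rho ((x :: t) ++ [c]) = x * (t ++ [c]).prod - rho (t ++ [c]) := rfl
    rw [hstep, ih, List.prod_append, List.length_cons, pow_succ, pow_succ]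
    simp only [List.prod_cons, List.prod_nil]
    rw [show rho (x :: t) = x * t.prod - rho t from rfl]
    ring

lemma rho_bounds (L : List ℤ) (h : ∀ x ∈ L, 2 ≤ x) :
    1 ≤ rho L ∧ rho L ≤ L.prod := by
  induction L with
  | nil => simp [rho]
  | cons x t ih =>
    have hx : 2 ≤ x := h x (by simp)
    have ht := ih (fun y hy => h y (by simp [hy]))
    have hP : 1 ≤ t.prod := le_trans ht.1 ht.2
    simp only [rho, List.prod_cons]
    constructor
    · nlinarith [ht.1, ht.2]
    · nlinarith [ht.1, ht.2]

lemma rho_ge_three (L : List ℤ) (hlen : 2 ≤ L.length) (h : ∀ x ∈ L, 2 ≤ x) :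
    3 ≤ rho L := by
  rcases L with _ | ⟨x, _ | ⟨y, t⟩⟩
  · simp at hlen
  · simp at hlen
  · have hx : 2 ≤ x := h x (by simp)
    have hy : 2 ≤ y := h y (by simp)
    obtain ⟨h1, h2⟩ := rho_bounds t (fun z hz => h z (by simp [hz]))
    have hP : 1 ≤ t.prod := le_trans h1 h2
    simp only [rho, List.prod_cons]
    have h3 : (2:ℤ) ≤ y * t.prod := by nlinarith
    nlinarith [mul_le_mul_of_nonneg_right hx (by linarith : (0:ℤ) ≤ y * t.prod)]

theorem stmt17 (n : ℕ) (hn : 3 ≤ n) (p μ : ℕ)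
    (hp : p.Prime) (hμ : μ.Prime)
    (hform : (μ : ℤ) = 2 * p + (-1 : ℤ) ^ n)
    (hbig : 2 ^ n < μ) :
    ¬ ∃ a : ℕ → ℤ, (∀ i, 1 ≤ i → i ≤ n → 2 ≤ a i) ∧
      (μ : ℤ) = rho ((List.range n).map
        (fun j => if j = n - 1 then a 1 + 1 else a (n - j))) := by
  rintro ⟨a, ha, heq⟩
  obtain ⟨m, rfl⟩ : ∃ m, n = m + 1 := ⟨n - 1, by omega⟩
  have hm : 2 ≤ m := by omega
  set xs := (List.range m).map (fun j => a (m + 1 - j)) with hxs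
  have hL : (List.range (m + 1)).map
      (fun j => if j = m + 1 - 1 then a 1 + 1 else a (m + 1 - j)) = xs ++ [a 1 + 1] := by
    rw [List.range_succ, List.map_append]
    congr 1
    · apply List.map_congr_left
      intro j hj
      rw [List.mem_range] at hj
      rw [if_neg (by omega)]
    · simp
  rw [hL, rho_append_singleton] at heq
  have hlen : xs.length = m := by simp [hxs]
  rw [hlen] at heq
  have hxs2 : ∀ z ∈ xs, 2 ≤ z := by
    intro z hz
    rw [hxs, List.mem_map] at hz
    obtain ⟨j, hj, rfl⟩ := hz
    rw [List.mem_range] at hj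
    exact ha (m + 1 - j) (by omega) (by omega)
  have hR3 : 3 ≤ rho xs := rho_ge_three xs (by omega) hxs2
  have hA : 3 ≤ a 1 + 1 := by
    have := ha 1 le_rfl (by omega)
    linarith
  have key : 2 * (p : ℤ) = (a 1 + 1) * rho xs := by linarith [hform, heq]
  have hp9 : 9 ≤ 2 * (p : ℤ) := by nlinarith
  have hp5 : 5 ≤ (p : ℤ) := by omega
  have hdvd : ((p : ℕ) : ℤ) ∣ (a 1 + 1) * rho xs := ⟨2, by linarith⟩
  rcases Int.Prime.dvd_mul' hp hdvd with h | h
  · have hle : (p : ℤ) ≤ a 1 + 1 := Int.le_of_dvd (by linarith) h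
    nlinarith
  · have hle : (p : ℤ) ≤ rho xs := Int.le_of_dvd (by linarith) h
    nlinarith
end
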